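/- Let a, b, c be real numbers with a² + b² < c². Then for all (x,y) ∈ ℝ², the point F_{a,b,c}(x,y) ∈ ℂ³ ≅ ℝ⁶ has Euclidean norm 1; that is, ((b²+c²−a²)/(2(c²−a²))) sin²y + ((a²+c²−b²)/(2(c²−b²))) cos²y + ((c²−a²−b²)/(2(c²−b²)))·(1 − ((b²−a²)/(c²−a²)) sin²y) = 1, so the image of F_{a,b,c} lies in the unit sphere S⁵. -/

import Mathlib

open Real

/-- The generalized Lawson immersion `F_{a,b,c} : ℝ² → ℂ³ ≅ ℝ⁶`, whose image (for
suitable integers `a`, `b`, `c`) is the generalized Lawson surface `T_{a,b,c}`. -/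
noncomputable def genLawson (a b c : ℝ) : ℝ × ℝ → EuclideanSpace ℝ (Fin 6) := fun p =>
  WithLp.toLp 2 (![Real.sqrt ((b^2 + c^2 - a^2) / (2 * (c^2 - a^2))) * Real.cos (a * p.1) * Real.sin p.2,
    Real.sqrt ((b^2 + c^2 - a^2) / (2 * (c^2 - a^2))) * Real.sin (a * p.1) * Real.sin p.2,
    Real.sqrt ((a^2 + c^2 - b^2) / (2 * (c^2 - b^2))) * Real.cos (b * p.1) * Real.cos p.2,
    Real.sqrt ((a^2 + c^2 - b^2) / (2 * (c^2 - b^2))) * Real.sin (b * p.1) * Real.cos p.2,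
    Real.sqrt ((c^2 - a^2 - b^2) / (2 * (c^2 - b^2))) * Real.cos (c * p.1) *
      Real.sqrt (1 - (b^2 - a^2) / (c^2 - a^2) * Real.sin p.2 ^ 2),
    Real.sqrt ((c^2 - a^2 - b^2) / (2 * (c^2 - b^2))) * Real.sin (c * p.1) *
      Real.sqrt (1 - (b^2 - a^2) / (c^2 - a^2) * Real.sin p.2 ^ 2)])

/-! Writing `F_{a,b,c}(x,y) = (r₁ e^{iax}, r₂ e^{ibx}, r₃ e^{icx})`, the phases drop out of the
norm, so `‖F‖² = r₁² + r₂² + r₃²`. With `s = sin² y` this is `A s + B (1 - s) + C (1 - k s)`,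
which equals 1 identically in `s` as a rational function of `a², b², c²`. The condition
`a² + b² < c²` makes every radicand nonnegative, so each `rᵢ²` is the radicand itself. -/

theorem lawson_weights_sum {a b c : ℝ} (hca : c^2 - a^2 ≠ 0) (hcb : c^2 - b^2 ≠ 0) (s : ℝ) :
    (b^2 + c^2 - a^2) / (2 * (c^2 - a^2)) * s
      + (a^2 + c^2 - b^2) / (2 * (c^2 - b^2)) * (1 - s)
      + (c^2 - a^2 - b^2) / (2 * (c^2 - b^2)) * (1 - (b^2 - a^2) / (c^2 - a^2) * s) = 1 := by
  field_simp
  ring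

theorem norm_sq_toLp_three_circles (p₁ p₂ p₃ q₁ q₂ q₃ α β γ : ℝ) :
    ‖(WithLp.toLp 2 ![p₁ * cos α * q₁, p₁ * sin α * q₁, p₂ * cos β * q₂, p₂ * sin β * q₂,
        p₃ * cos γ * q₃, p₃ * sin γ * q₃] : EuclideanSpace ℝ (Fin 6))‖ ^ 2
      = (p₁ * q₁) ^ 2 + (p₂ * q₂) ^ 2 + (p₃ * q₃) ^ 2 := by
  simp only [EuclideanSpace.real_norm_sq_eq, Fin.sum_univ_six, Matrix.cons_val]
  linear_combination (p₁ * q₁) ^ 2 * sin_sq_add_cos_sq α + (p₂ * q₂) ^ 2 * sin_sq_add_cos_sq β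
    + (p₃ * q₃) ^ 2 * sin_sq_add_cos_sq γ

theorem genLawson_norm_sq {a b c : ℝ} (h : a^2 + b^2 < c^2) (x y : ℝ) :
    ‖genLawson a b c (x, y)‖ ^ 2
      = (b^2 + c^2 - a^2) / (2 * (c^2 - a^2)) * sin y ^ 2
        + (a^2 + c^2 - b^2) / (2 * (c^2 - b^2)) * cos y ^ 2
        + (c^2 - a^2 - b^2) / (2 * (c^2 - b^2)) * (1 - (b^2 - a^2) / (c^2 - a^2) * sin y ^ 2) := by
  have hca : 0 < c^2 - a^2 := by nlinarith [sq_nonneg b]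
  have hcb : 0 < c^2 - b^2 := by nlinarith [sq_nonneg a]
  have hA : 0 ≤ (b^2 + c^2 - a^2) / (2 * (c^2 - a^2)) := by
    apply div_nonneg <;> nlinarith [sq_nonneg b]
  have hB : 0 ≤ (a^2 + c^2 - b^2) / (2 * (c^2 - b^2)) := by
    apply div_nonneg <;> nlinarith [sq_nonneg a]
  have hC : 0 ≤ (c^2 - a^2 - b^2) / (2 * (c^2 - b^2)) := by
    apply div_nonneg <;> linarith
  have hE : 0 ≤ 1 - (b^2 - a^2) / (c^2 - a^2) * sin y ^ 2 := by
    rw [div_mul_eq_mul_div, sub_nonneg, div_le_one hca]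
    nlinarith [sin_sq_le_one y, sq_nonneg (sin y)]
  rw [genLawson, norm_sq_toLp_three_circles]
  simp only [mul_pow, sq_sqrt hA, sq_sqrt hB, sq_sqrt hC, sq_sqrt hE]

/-- For `a² + b² < c²`, every point `F_{a,b,c}(x,y)` has Euclidean norm 1, that is,
`((b²+c²−a²)/(2(c²−a²)))sin²y + ((a²+c²−b²)/(2(c²−b²)))cos²y
+ ((c²−a²−b²)/(2(c²−b²)))(1 − ((b²−a²)/(c²−a²))sin²y) = 1`:
the image of `F_{a,b,c}` lies in the unit sphere `S⁵`. -/
theorem genLawson_mem_sphere (a b c : ℝ) (h : a^2 + b^2 < c^2) (x y : ℝ) :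
    ‖genLawson a b c (x, y)‖ = 1 ∧
    (b^2 + c^2 - a^2) / (2 * (c^2 - a^2)) * Real.sin y ^ 2
      + (a^2 + c^2 - b^2) / (2 * (c^2 - b^2)) * Real.cos y ^ 2
      + (c^2 - a^2 - b^2) / (2 * (c^2 - b^2))
          * (1 - (b^2 - a^2) / (c^2 - a^2) * Real.sin y ^ 2) = 1 := by
  have hca : c^2 - a^2 ≠ 0 := by nlinarith [sq_nonneg b]
  have hcb : c^2 - b^2 ≠ 0 := by nlinarith [sq_nonneg a]
  have hsum := lawson_weights_sum hca hcb (sin y ^ 2)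
  rw [← cos_sq'] at hsum
  refine ⟨?_, hsum⟩
  rw [← pow_eq_one_iff_of_nonneg (norm_nonneg _) two_ne_zero, genLawson_norm_sq h, hsum]
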